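/- Let μ be a non-atomic Borel probability measure on the Cantor space Ω, let x be a finite binary string with μ([x]) > 0, and let ε be a real number with 0 < ε < μ([x]). Then there exists a finite binary string y extending x (x is a prefix of y) such that ε/3 < μ([y]) ≤ ε. -/

import Mathlib

open MeasureTheory Filter
open scoped ENNReal

/-- The cylinder `[x]` of a finite binary string `x` in the Cantor space `ℕ → Bool`:
the set of infinite sequences extending `x`. -/
def cyl (x : List Bool) : Set (ℕ → Bool) :=
  {ω | ∀ i : ℕ, (h : i < x.length) → ω i = x.get ⟨i, h⟩}

lemma measurableSet_cyl (x : List Bool) : MeasurableSet (cyl x) := by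
  have : cyl x = ⋂ (i : Fin x.length), {ω : ℕ → Bool | ω i = x.get i} := by
    ext ω
    simp only [cyl, Set.mem_setOf_eq, Set.mem_iInter]
    constructor
    · intro h i; exact h i i.isLt
    · intro h i hi; exact h ⟨i, hi⟩
  rw [this]
  exact MeasurableSet.iInter fun i =>
    (measurable_pi_apply (i : ℕ)) (MeasurableSet.singleton _)

lemma mem_cyl_concat {ω : ℕ → Bool} {x : List Bool} {b : Bool} :
    ω ∈ cyl (x ++ [b]) ↔ ω ∈ cyl x ∧ ω x.length = b := by
  constructor
  · intro h
    constructor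
    · intro i hi
      have h' := h i (by simp; omega)
      simp only [List.get_eq_getElem] at h' ⊢
      rwa [List.getElem_append_left hi] at h'
    · have h' := h x.length (by simp)
      simpa using h'
  · rintro ⟨h1, h2⟩ i hi
    simp only [List.length_append, List.length_singleton] at hi
    rcases lt_or_eq_of_le (Nat.lt_succ_iff.mp hi) with hi' | hi'
    · simp only [List.get_eq_getElem]
      rw [List.getElem_append_left hi']
      exact h1 i hi'
    · subst hi'; simpa using h2

lemma cyl_prefix_subset {x y : List Bool} (h : x <+: y) : cyl y ⊆ cyl x := by
  obtain ⟨t, rfl⟩ := h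
  intro ω hω i hi
  have h' := hω i (by simp; omega)
  simp only [List.get_eq_getElem] at h' ⊢
  rwa [List.getElem_append_left hi] at h'

lemma cyl_concat_subset (x : List Bool) (b : Bool) : cyl (x ++ [b]) ⊆ cyl x :=
  fun _ h => (mem_cyl_concat.mp h).1

lemma cyl_subset_union (x : List Bool) :
    cyl x ⊆ cyl (x ++ [false]) ∪ cyl (x ++ [true]) := by
  intro ω h
  cases hb : ω x.length
  · left; exact mem_cyl_concat.mpr ⟨h, hb⟩
  · right; exact mem_cyl_concat.mpr ⟨h, hb⟩

/-- construction of the intervals `D_k`, property (3) in Theorem 2.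
For a non-atomic Borel probability measure `μ` on the Cantor space, a string `x` with
`μ([x]) > 0`, and `0 < ε < μ([x])`, there is an extension `y` of `x` with
`ε/3 < μ([y]) ≤ ε`. -/
theorem stmt11 (μ : Measure (ℕ → Bool)) [IsProbabilityMeasure μ]
    (hna : ∀ ω : ℕ → Bool, μ {ω} = 0)
    (x : List Bool) (hx : 0 < μ (cyl x))
    (ε : ℝ) (hε : 0 < ε) (hεx : ENNReal.ofReal ε < μ (cyl x)) :
    ∃ y : List Bool, x <+: y ∧
      ENNReal.ofReal (ε / 3) < μ (cyl y) ∧ μ (cyl y) ≤ ENNReal.ofReal ε := by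
  classical
  -- greedy extension: always take the child with larger measure
  set g : List Bool → List Bool := fun s =>
    if μ (cyl (s ++ [false])) ≤ μ (cyl (s ++ [true])) then s ++ [true] else s ++ [false]
    with hg
  set f : ℕ → List Bool := fun n => g^[n] x with hf
  have hf0 : f 0 = x := rfl
  have hfs : ∀ n, f (n + 1) = g (f n) := by
    intro n; simp [hf, Function.iterate_succ_apply']
  -- each f n is an extension of x
  have hpre : ∀ n, x <+: f n := by
    intro n; induction n with
    | zero => exact List.prefix_refl x
    | succ n ih =>
      rw [hfs]
      refine ih.trans ?_
      by_cases h : μ (cyl (f n ++ [false])) ≤ μ (cyl (f n ++ [true])) <;>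
        simp [hg, h, List.prefix_append]
  have hlen : ∀ n, (f n).length = x.length + n := by
    intro n; induction n with
    | zero => simp [hf0]
    | succ n ih =>
      rw [hfs, hg]
      dsimp only
      split <;> simp [ih] <;> omega
  -- the chosen child has at least half the measure
  have hhalf : ∀ n, μ (cyl (f n)) ≤ 2 * μ (cyl (f (n + 1))) := by
    intro n
    have hsub := cyl_subset_union (f n)
    have hle : μ (cyl (f n)) ≤ μ (cyl (f n ++ [false])) + μ (cyl (f n ++ [true])) :=
      le_trans (measure_mono hsub) (measure_union_le _ _)
    rw [hfs]
    by_cases h : μ (cyl (f n ++ [false])) ≤ μ (cyl (f n ++ [true]))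
    · simp only [hg, if_pos h]
      calc μ (cyl (f n)) ≤ _ + _ := hle
        _ ≤ μ (cyl (f n ++ [true])) + μ (cyl (f n ++ [true])) := by gcongr
        _ = 2 * μ (cyl (f n ++ [true])) := (two_mul _).symm
    · simp only [hg, if_neg h]
      push_neg at h
      calc μ (cyl (f n)) ≤ _ + _ := hle
        _ ≤ μ (cyl (f n ++ [false])) + μ (cyl (f n ++ [false])) := by gcongr
        _ = 2 * μ (cyl (f n ++ [false])) := (two_mul _).symm
  -- f is a chain of extensions
  have hmono : ∀ n, f n <+: f (n + 1) := by
    intro n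
    rw [hfs, hg]
    dsimp only
    split <;> exact List.prefix_append _ _
  have hanti : Antitone fun n => cyl (f n) := by
    apply antitone_nat_of_succ_le
    intro n
    exact cyl_prefix_subset (hmono n)
  -- the intersection is a single point
  set ω₀ : ℕ → Bool := fun i => (f (i + 1)).getD i false with hω₀
  have hsing : (⋂ n, cyl (f n)) ⊆ {ω₀} := by
    intro ω hω
    have : ∀ i, ω i = ω₀ i := by
      intro i
      have hmem : ω ∈ cyl (f (i + 1)) := Set.mem_iInter.mp hω (i + 1)
      have hi : i < (f (i + 1)).length := by rw [hlen]; omega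
      have := hmem i hi
      simp only [List.get_eq_getElem] at this
      rw [this, hω₀]
      simp [List.getD_eq_getElem?_getD, List.getElem?_eq_getElem hi]
    exact funext this
  have hzero : μ (⋂ n, cyl (f n)) = 0 :=
    le_antisymm (le_trans (measure_mono hsing) (le_of_eq (hna ω₀))) zero_le
  -- continuity from above
  have htend : Tendsto (fun n => μ (cyl (f n))) atTop (nhds 0) := by
    have := MeasureTheory.tendsto_measure_iInter_atTop
      (μ := μ) (s := fun n => cyl (f n))
      (fun n => (measurableSet_cyl (f n)).nullMeasurableSet) hanti
      ⟨0, measure_ne_top μ _⟩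
    rwa [hzero] at this
  -- find the first n with μ (cyl (f n)) ≤ ε
  have hex : ∃ n, μ (cyl (f n)) ≤ ENNReal.ofReal ε := by
    have hpos : (0 : ℝ≥0∞) < ENNReal.ofReal ε := ENNReal.ofReal_pos.mpr hε
    have := htend.eventually_lt_const hpos
    obtain ⟨n, hn⟩ := this.exists
    exact ⟨n, hn.le⟩
  set N := Nat.find hex with hN
  have hNle : μ (cyl (f N)) ≤ ENNReal.ofReal ε := Nat.find_spec hex
  have hNpos : 0 < N := by
    rcases Nat.eq_zero_or_pos N with h | h
    · exfalso
      have := hNle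
      rw [h, hf0] at this
      exact absurd this (not_le.mpr hεx)
    · exact h
  refine ⟨f N, hpre N, ?_, hNle⟩
  -- lower bound: previous level exceeds ε, so current exceeds ε/2 > ε/3
  have hprev : ¬ μ (cyl (f (N - 1))) ≤ ENNReal.ofReal ε :=
    Nat.find_min hex (Nat.sub_lt hNpos one_pos)
  push_neg at hprev
  have h2 : μ (cyl (f (N - 1))) ≤ 2 * μ (cyl (f N)) := by
    have := hhalf (N - 1)
    rwa [Nat.sub_add_cancel hNpos] at this
  have : ENNReal.ofReal ε < 2 * μ (cyl (f N)) := lt_of_lt_of_le hprev h2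
  have hlow : ENNReal.ofReal ε / 2 < μ (cyl (f N)) := by
    rw [ENNReal.div_lt_iff (by norm_num) (by norm_num)]
    rwa [mul_comm]
  calc ENNReal.ofReal (ε / 3) < ENNReal.ofReal (ε / 2) := by
        apply ENNReal.ofReal_lt_ofReal_iff_of_nonneg (by positivity) |>.mpr
        linarith
    _ = ENNReal.ofReal ε / 2 := by
        rw [ENNReal.ofReal_div_of_pos (by norm_num)]; norm_num
    _ ≤ μ (cyl (f N)) := hlow.le
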